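/- arXiv:1501.03638 — 4 statements merged into one kernel-verified Lean document; each statement's English description precedes it below -/
import Mathlib

section
/- Let α, β > 0 and let μ_{α,β} be the Bessel distribution with parameters α, β. Then for every u ∈ ℂ with Re u ≤ 0, ∫_{[0,∞)} e^{u x} μ_{α,β}(dx) = exp(α u/(β − u)). -/
open MeasureTheory Set

noncomputable section

/-- Modified Bessel function of the first kind of order 1. -/
def besselI1 (r : ℝ) : ℝ :=
  (r / 2) * ∑' k : ℕ, (r ^ 2 / 4) ^ k / (Nat.factorial k * Nat.factorial (k + 1))

/-- Modified Bessel function of the first kind of order `q` (for `r > 0`). -/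
def besselI (q r : ℝ) : ℝ :=
  (r / 2) ^ q * ∑' k : ℕ, (r ^ 2 / 4) ^ k / (Nat.factorial k * Real.Gamma (q + k + 1))

/-- Density part of the Bessel distribution with parameters `α, β` (for `x > 0`). -/
def besselDensity (α β x : ℝ) : ℝ :=
  β * Real.exp (-α - β * x) * Real.sqrt (α / (β * x)) * besselI1 (2 * Real.sqrt (α * β * x))

/-- The Bessel distribution `μ_{α,β}` on `[0,∞)`. -/
def besselMeasure (α β : ℝ) : Measure ℝ :=
  ENNReal.ofReal (Real.exp (-α)) • Measure.dirac 0 +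
    volume.withDensity fun x => ENNReal.ofReal (Set.indicator (Set.Ioi 0) (besselDensity α β) x)

/-- The mixture of Bessel distributions `m_{α,β,γ}`, mixing `μ_{αt,β}` over `t`
with Gamma(`γ`, 1) weights. -/
def besselMixture (α β γ : ℝ) : Measure ℝ :=
  (ProbabilityTheory.gammaMeasure γ 1).bind fun t => besselMeasure (α * t) β

/-- Density of the Gamma distribution with shape `k` and rate `r`. -/
def gammaDens (k r x : ℝ) : ℝ :=
  r ^ k * x ^ (k - 1) * Real.exp (-r * x) / Real.Gamma k

/-- The density `g_{α,β,γ}`, a mixture of Gamma densities. -/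
def gMix (α β γ x : ℝ) : ℝ :=
  ∑' k : ℕ, α ^ (k + 1) * Real.Gamma ((k + 1 : ℕ) + γ) /
      ((α + 1) ^ ((k + 1 : ℕ) + γ) * Real.Gamma γ * Nat.factorial (k + 1)) *
    gammaDens (k + 1 : ℕ) β x

/-- Transition density of the CIR process with parameters `a, θ, σ`. -/
def cirDensity (a θ σ : ℝ) (t x y : ℝ) : ℝ :=
  let ρ : ℝ := 2 * a / (σ ^ 2 * (1 - Real.exp (-a * t)))
  let q : ℝ := 2 * a * θ / σ ^ 2 - 1
  let v : ℝ := ρ * y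
  if x = 0 then ρ * v ^ q * Real.exp (-v) / Real.Gamma (q + 1)
  else
    let u : ℝ := ρ * x * Real.exp (-a * t)
    ρ * Real.exp (-u - v) * (v / u) ^ (q / 2) * besselI q (2 * Real.sqrt (u * v))

/-- The function `L₁(t) = e^{-at} + (σ²d/(2a))(1 - e^{-at})`. -/
def L1 (a σ d t : ℝ) : ℝ :=
  Real.exp (-a * t) + σ ^ 2 * d / (2 * a) * (1 - Real.exp (-a * t))

/-- The jump part `h(t,z)` of the BAJD transition density. -/
def bajdJump (a σ c d : ℝ) (t z : ℝ) : ℝ :=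
  if 0 < a - σ ^ 2 * d / 2 then
    gMix (1 / L1 a σ d t - 1) (d / L1 a σ d t) (c / (a - σ ^ 2 * d / 2)) z
  else if a - σ ^ 2 * d / 2 < 0 then
    gMix (L1 a σ d t - 1) d (-c / (a - σ ^ 2 * d / 2)) z
  else
    d * Real.exp (-((c / a) * (1 - Real.exp (-a * t))) - d * z) *
      Real.sqrt ((c / a) * (1 - Real.exp (-a * t)) / (d * z)) *
      besselI1 (2 * Real.sqrt ((c / a) * (1 - Real.exp (-a * t)) * d * z))

/-- Transition density of the basic affine jump-diffusion. -/
def bajdDensity (a θ σ c d : ℝ) (t x y : ℝ) : ℝ :=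
  (if a - σ ^ 2 * d / 2 = 0 then Real.exp (-((c / a) * (1 - Real.exp (-a * t))))
    else L1 a σ d t ^ (c / (a - σ ^ 2 * d / 2))) * cirDensity a θ σ t x y +
  ∫ z in (0 : ℝ)..y, cirDensity a θ σ t x (y - z) * bajdJump a σ c d t z

/-- The limit jump part `h∞(z)` appearing in the invariant density of the BAJD. -/
def bajdJumpInf (a σ c d : ℝ) (z : ℝ) : ℝ :=
  if 0 < a - σ ^ 2 * d / 2 then
    gMix (2 * a / (σ ^ 2 * d) - 1) (2 * a / σ ^ 2) (c / (a - σ ^ 2 * d / 2)) z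
  else if a - σ ^ 2 * d / 2 < 0 then
    gMix (σ ^ 2 * d / (2 * a) - 1) d (-c / (a - σ ^ 2 * d / 2)) z
  else
    d * Real.exp (-(c / a) - d * z) * Real.sqrt (c / (a * d * z)) *
      besselI1 (2 * Real.sqrt (c * d * z / a))

/-- Density of the unique invariant probability measure of the BAJD. -/
def invDensity (a θ σ c d : ℝ) (y : ℝ) : ℝ :=
  (if a - σ ^ 2 * d / 2 = 0 then Real.exp (-(c / a))
    else (σ ^ 2 * d / (2 * a)) ^ (c / (a - σ ^ 2 * d / 2))) *
    gammaDens (2 * a * θ / σ ^ 2) (2 * a / σ ^ 2) y +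
  ∫ z in (0 : ℝ)..y, gammaDens (2 * a * θ / σ ^ 2) (2 * a / σ ^ 2) (y - z) * bajdJumpInf a σ c d z

end

/-!
Expanding `I₁` shows that `μ_{α,β}` is the law of a Poisson(`α`) number of independent
Exp(`β`) variables:
`μ_{α,β} = e^{-α} δ₀ + ∑_{k ≥ 0} e^{-α} α^{k+1}/(k+1)! · Gamma(k+1, β)(dx)`.
Integrating `e^{ux}` term by term with `∫₀^∞ x^k e^{-sx} dx = k!/s^{k+1}` (`Re s > 0`,
here `s = β - u`) turns the sum into `e^{-α} ∑_n (αβ/(β-u))^n / n! = exp (-α + αβ/(β-u))`.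
-/

open MeasureTheory Set Filter
open scoped ENNReal Nat

section MeasureTheory

variable {X E : Type*} [MeasurableSpace X] {μ : Measure X} [NormedAddCommGroup E]

theorem MeasureTheory.integrable_tsum_of_summable_integral_norm [CompleteSpace E] {ι : Type*}
    [Countable ι] {F : ι → X → E} (hF_int : ∀ i, Integrable (F i) μ)
    (hF_sum : Summable fun i ↦ ∫ x, ‖F i x‖ ∂μ) :
    Integrable (fun x ↦ ∑' i, F i x) μ := by
  have hF_enorm : ∀ i, AEMeasurable (fun x ↦ ‖F i x‖ₑ) μ := fun i ↦ (hF_int i).1.enorm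
  have hlt : ∫⁻ x, ∑' i, ‖F i x‖ₑ ∂μ < ∞ := by
    rw [lintegral_tsum hF_enorm]
    simp_rw [← ofReal_integral_norm_eq_lintegral_enorm (hF_int _)]
    rw [← ENNReal.ofReal_tsum_of_nonneg (fun i ↦ integral_nonneg fun x ↦ norm_nonneg _) hF_sum]
    exact ENNReal.ofReal_lt_top
  have hsum : ∀ᵐ x ∂μ, Summable fun i ↦ F i x := by
    filter_upwards [ae_lt_top' (AEMeasurable.tsum hF_enorm) hlt.ne] with x hx
    exact (tsum_enorm_ne_top_iff_summable_norm.mp hx.ne).of_norm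
  refine ⟨aestronglyMeasurable_of_tendsto_ae atTop
    (fun s ↦ Finset.aestronglyMeasurable_sum s fun i _ ↦ (hF_int i).1) ?_, ?_⟩
  · filter_upwards [hsum] with x hx
    simp only [Finset.sum_apply]
    exact hx.hasSum
  · exact (lintegral_mono fun x ↦ enorm_tsum_le_tsum_enorm).trans_lt hlt

variable [NormedSpace ℝ E] {g : X → ℝ}

theorem MeasureTheory.integral_withDensity_ofReal (hg : AEMeasurable g μ) (hg0 : 0 ≤ᵐ[μ] g)
    (f : X → E) :
    ∫ x, f x ∂μ.withDensity (fun x ↦ ENNReal.ofReal (g x)) = ∫ x, g x • f x ∂μ := by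
  refine (integral_withDensity_eq_integral_smul₀ hg.real_toNNReal f).trans (integral_congr_ae ?_)
  filter_upwards [hg0] with x hx
  rw [NNReal.smul_def, Real.coe_toNNReal _ hx]

theorem MeasureTheory.integrable_withDensity_ofReal_iff (hg : AEMeasurable g μ)
    (hg0 : 0 ≤ᵐ[μ] g) {f : X → E} :
    Integrable f (μ.withDensity fun x ↦ ENNReal.ofReal (g x)) ↔
      Integrable (fun x ↦ g x • f x) μ := by
  refine (integrable_withDensity_iff_integrable_smul₀ hg.real_toNNReal).trans (integrable_congr ?_)
  filter_upwards [hg0] with x hx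
  rw [NNReal.smul_def, Real.coe_toNNReal _ hx]

end MeasureTheory

section Laplace

variable {s : ℂ}

theorem norm_ofReal_pow_mul_cexp_neg_mul (k : ℕ) {x : ℝ} (hx : 0 ≤ x) :
    ‖(x : ℂ) ^ k * Complex.exp (-(s * x))‖ = x ^ k * Real.exp (-(s.re * x)) := by
  rw [norm_mul, norm_pow, Complex.norm_exp, Complex.norm_real, Real.norm_of_nonneg hx]
  simp

theorem integrableOn_Ioi_pow_mul_cexp_neg_mul (hs : 0 < s.re) (k : ℕ) :
    IntegrableOn (fun x : ℝ ↦ (x : ℂ) ^ k * Complex.exp (-(s * x))) (Ioi 0) := by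
  have hreal : IntegrableOn (fun x : ℝ ↦ x ^ (k : ℝ) * Real.exp (-(s.re * x))) (Ioi 0) := by
    simpa using integrableOn_rpow_mul_exp_neg_mul_rpow (p := 1) (s := k)
      (by linarith [(Nat.cast_nonneg k : (0 : ℝ) ≤ k)]) one_pos hs
  refine Integrable.mono' hreal (by fun_prop) ?_
  filter_upwards [ae_restrict_mem measurableSet_Ioi] with x hx
  rw [norm_ofReal_pow_mul_cexp_neg_mul k hx.out.le, Real.rpow_natCast]

theorem integral_Ioi_norm_pow_mul_cexp_neg_mul (hs : 0 < s.re) (k : ℕ) :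
    ∫ x in Ioi (0 : ℝ), ‖(x : ℂ) ^ k * Complex.exp (-(s * x))‖ = k ! / s.re ^ (k + 1) := by
  rw [setIntegral_congr_fun measurableSet_Ioi
    fun x hx ↦ norm_ofReal_pow_mul_cexp_neg_mul k (le_of_lt hx)]
  have h := Real.integral_rpow_mul_exp_neg_mul_Ioi (a := k + 1) (by positivity) hs
  simp only [add_sub_cancel_right, Real.rpow_natCast, Real.Gamma_nat_eq_factorial] at h
  rw [h, ← Nat.cast_succ, Real.rpow_natCast, one_div, inv_pow, inv_mul_eq_div]

theorem hasDerivAt_ofReal_pow_succ_mul_cexp_neg_mul (k : ℕ) (x : ℝ) :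
    HasDerivAt (fun x : ℝ ↦ (x : ℂ) ^ (k + 1) * Complex.exp (-(s * x)))
      ((k + 1) * ((x : ℂ) ^ k * Complex.exp (-(s * x))) -
        s * ((x : ℂ) ^ (k + 1) * Complex.exp (-(s * x)))) x := by
  have h : HasDerivAt (fun z : ℂ ↦ z ^ (k + 1) * Complex.exp (-(s * z)))
      ((k + 1) * (x : ℂ) ^ k * Complex.exp (-(s * x)) +
        (x : ℂ) ^ (k + 1) * (Complex.exp (-(s * x)) * -s)) x := by
    simpa using (hasDerivAt_pow (k + 1) (x : ℂ)).fun_mul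
      (((hasDerivAt_id (x : ℂ)).const_mul s).neg.cexp)
  convert h.comp_ofReal using 1
  ring

theorem tendsto_ofReal_pow_mul_cexp_neg_mul_atTop (hs : 0 < s.re) (k : ℕ) :
    Tendsto (fun x : ℝ ↦ (x : ℂ) ^ k * Complex.exp (-(s * x))) atTop (nhds 0) := by
  rw [tendsto_zero_iff_norm_tendsto_zero]
  refine (tendsto_rpow_mul_exp_neg_mul_atTop_nhds_zero k s.re hs).congr' ?_
  filter_upwards [eventually_ge_atTop 0] with x hx
  rw [norm_ofReal_pow_mul_cexp_neg_mul k hx, Real.rpow_natCast, neg_mul]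

theorem integral_Ioi_pow_mul_cexp_neg_mul (hs : 0 < s.re) (k : ℕ) :
    ∫ x in Ioi (0 : ℝ), (x : ℂ) ^ k * Complex.exp (-(s * x)) = k ! / s ^ (k + 1) := by
  have hs0 : s ≠ 0 := fun h ↦ by simp [h] at hs
  induction k with
  | zero =>
    simpa [neg_mul] using integral_exp_mul_complex_Ioi (a := -s) (by simpa using hs) 0
  | succ k ih =>
    have hint := integrableOn_Ioi_pow_mul_cexp_neg_mul hs
    -- `s I_{k+1} = (k+1) I_k`: FTC for `x^(k+1) e^{-sx}`, which vanishes at `0` and at `∞`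
    have hparts := integral_Ioi_of_hasDerivAt_of_tendsto (by fun_prop)
      (fun x _ ↦ hasDerivAt_ofReal_pow_succ_mul_cexp_neg_mul k x)
      (((hint k).const_mul _).sub ((hint (k + 1)).const_mul _))
      (tendsto_ofReal_pow_mul_cexp_neg_mul_atTop hs (k + 1))
    rw [integral_sub ((hint k).const_mul _) ((hint (k + 1)).const_mul _),
      integral_const_mul, integral_const_mul, ih] at hparts
    simp only [Complex.ofReal_zero, zero_pow k.succ_ne_zero, zero_mul, sub_zero] at hparts
    rw [Nat.factorial_succ, Nat.cast_mul, eq_div_iff (pow_ne_zero _ hs0)]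
    field_simp at hparts
    push_cast
    linear_combination -hparts

variable {a : ℕ → ℂ}

theorem summable_integral_Ioi_norm_mul_pow_mul_cexp_neg_mul (hs : 0 < s.re)
    (ha : Summable fun k ↦ ‖a k‖ * k ! / s.re ^ (k + 1)) :
    Summable fun k ↦ ∫ x in Ioi (0 : ℝ), ‖a k * ((x : ℂ) ^ k * Complex.exp (-(s * x)))‖ := by
  refine ha.congr fun k ↦ ?_
  simp_rw [norm_mul (a k), integral_const_mul, integral_Ioi_norm_pow_mul_cexp_neg_mul hs]
  ring

theorem integrableOn_tsum_mul_pow_mul_cexp_neg_mul (hs : 0 < s.re)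
    (ha : Summable fun k ↦ ‖a k‖ * k ! / s.re ^ (k + 1)) :
    IntegrableOn (fun x : ℝ ↦ ∑' k, a k * ((x : ℂ) ^ k * Complex.exp (-(s * x)))) (Ioi 0) :=
  integrable_tsum_of_summable_integral_norm
    (fun k ↦ (integrableOn_Ioi_pow_mul_cexp_neg_mul hs k).const_mul (a k))
    (summable_integral_Ioi_norm_mul_pow_mul_cexp_neg_mul hs ha)

theorem integral_Ioi_tsum_mul_pow_mul_cexp_neg_mul (hs : 0 < s.re)
    (ha : Summable fun k ↦ ‖a k‖ * k ! / s.re ^ (k + 1)) :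
    ∫ x in Ioi (0 : ℝ), ∑' k, a k * ((x : ℂ) ^ k * Complex.exp (-(s * x))) =
      ∑' k, a k * (k ! / s ^ (k + 1)) := by
  rw [← integral_tsum_of_summable_integral_norm
    (fun k ↦ (integrableOn_Ioi_pow_mul_cexp_neg_mul hs k).const_mul (a k))
    (summable_integral_Ioi_norm_mul_pow_mul_cexp_neg_mul hs ha)]
  simp_rw [integral_const_mul, integral_Ioi_pow_mul_cexp_neg_mul hs]

end Laplace

theorem Complex.hasSum_pow_succ_div_factorial_succ (z : ℂ) :
    HasSum (fun k : ℕ ↦ z ^ (k + 1) / (k + 1)!) (Complex.exp z - 1) := by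
  have h := (hasSum_nat_add_iff' 1).mpr
    (Complex.exp_eq_exp_ℂ ▸ NormedSpace.expSeries_div_hasSum_exp z)
  simpa using h

@[fun_prop]
theorem measurable_besselI1 : Measurable besselI1 := by
  unfold besselI1
  fun_prop

theorem measurable_besselDensity (α β : ℝ) : Measurable (besselDensity α β) := by
  unfold besselDensity
  fun_prop

theorem besselI1_nonneg {r : ℝ} (hr : 0 ≤ r) : 0 ≤ besselI1 r :=
  mul_nonneg (by positivity) (tsum_nonneg fun k ↦ by positivity)

theorem besselI1_two_mul_sqrt {y : ℝ} (hy : 0 ≤ y) :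
    besselI1 (2 * Real.sqrt y) = Real.sqrt y * ∑' k : ℕ, y ^ k / (k ! * (k + 1)! : ℝ) := by
  rw [besselI1, mul_pow, Real.sq_sqrt hy]
  ring_nf

-- Poisson weight `e^{-α} α^{k+1}/(k+1)!` times the Gamma(`k+1`, `β`) normalisation `β^{k+1}/k!`.
noncomputable def besselCoeff (α β : ℝ) (k : ℕ) : ℝ :=
  Real.exp (-α) * (α * β) ^ (k + 1) / (k ! * (k + 1)! : ℝ)

section Bessel

variable {α β : ℝ}

theorem besselDensity_nonneg (hβ : 0 ≤ β) (x : ℝ) : 0 ≤ besselDensity α β x := by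
  have := besselI1_nonneg (r := 2 * Real.sqrt (α * β * x)) (by positivity)
  unfold besselDensity
  positivity

theorem besselDensity_eq_tsum (hα : 0 ≤ α) (hβ : 0 < β) {x : ℝ} (hx : 0 < x) :
    besselDensity α β x = ∑' k, besselCoeff α β k * (x ^ k * Real.exp (-(β * x))) := by
  have hsqrt : Real.sqrt (α / (β * x)) * Real.sqrt (α * β * x) = α := by
    rw [← Real.sqrt_mul (by positivity), show α / (β * x) * (α * β * x) = α ^ 2 by field_simp,
      Real.sqrt_sq hα]
  rw [besselDensity, besselI1_two_mul_sqrt (by positivity), ← tsum_mul_left, ← tsum_mul_left]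
  refine tsum_congr fun k ↦ ?_
  rw [besselCoeff, sub_eq_add_neg, Real.exp_add, mul_pow, pow_succ]
  linear_combination (Real.exp (-α) * Real.exp (-(β * x)) * β * (α * β) ^ k * x ^ k /
    (k ! * (k + 1)! : ℝ)) * hsqrt

theorem ofReal_besselDensity_mul_cexp (hα : 0 ≤ α) (hβ : 0 < β) (u : ℂ) {x : ℝ} (hx : 0 < x) :
    (besselDensity α β x : ℂ) * Complex.exp (u * x) =
      ∑' k, (besselCoeff α β k : ℂ) * ((x : ℂ) ^ k * Complex.exp (-((β - u) * x))) := by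
  rw [besselDensity_eq_tsum hα hβ hx, Complex.ofReal_tsum, ← tsum_mul_right]
  refine tsum_congr fun k ↦ ?_
  rw [show -((β - u) * x) = -(β * x) + u * x by ring, Complex.exp_add]
  push_cast
  ring

theorem summable_norm_besselCoeff_mul_factorial_div_pow (hα : 0 ≤ α) (hβ : 0 ≤ β) {r : ℝ}
    (hr : 0 < r) :
    Summable fun k ↦ ‖(besselCoeff α β k : ℂ)‖ * k ! / r ^ (k + 1) := by
  refine (((Real.summable_pow_div_factorial (α * β / r)).comp_injective
    (add_left_injective 1)).mul_left (Real.exp (-α))).congr fun k ↦ ?_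
  rw [besselCoeff, Complex.norm_real, Real.norm_of_nonneg (by positivity)]
  simp only [Function.comp_apply, div_pow]
  field_simp

theorem integrableOn_besselDensity_mul_cexp (hα : 0 ≤ α) (hβ : 0 < β) {u : ℂ} (hu : u.re < β) :
    IntegrableOn (fun x : ℝ ↦ (besselDensity α β x : ℂ) * Complex.exp (u * x)) (Ioi 0) := by
  have hs : 0 < ((β : ℂ) - u).re := by simpa using hu
  refine (integrableOn_tsum_mul_pow_mul_cexp_neg_mul hs
    (summable_norm_besselCoeff_mul_factorial_div_pow hα hβ.le hs)).congr_fun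
    (fun x hx ↦ (ofReal_besselDensity_mul_cexp hα hβ u hx).symm) measurableSet_Ioi

theorem setIntegral_besselDensity_mul_cexp (hα : 0 ≤ α) (hβ : 0 < β) {u : ℂ} (hu : u.re < β) :
    ∫ x in Ioi (0 : ℝ), (besselDensity α β x : ℂ) * Complex.exp (u * x) =
      Real.exp (-α) * (Complex.exp (α * β / (β - u)) - 1) := by
  have hs : 0 < ((β : ℂ) - u).re := by simpa using hu
  have hs0 : (β : ℂ) - u ≠ 0 := fun h ↦ by simp [h] at hs
  rw [setIntegral_congr_fun measurableSet_Ioi fun x hx ↦ ofReal_besselDensity_mul_cexp hα hβ u hx,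
    integral_Ioi_tsum_mul_pow_mul_cexp_neg_mul hs
      (summable_norm_besselCoeff_mul_factorial_div_pow hα hβ.le hs)]
  refine (((Complex.hasSum_pow_succ_div_factorial_succ _).mul_left _).congr_fun fun k ↦ ?_).tsum_eq
  have hk : (k ! : ℂ) ≠ 0 := by exact_mod_cast k.factorial_ne_zero
  rw [besselCoeff]
  push_cast
  rw [div_pow]
  field_simp

end Bessel

theorem besselMeasure_restrict_Ici (α β : ℝ) :
    (besselMeasure α β).restrict (Ici 0) = ENNReal.ofReal (Real.exp (-α)) • Measure.dirac 0 +
      (volume.restrict (Ioi 0)).withDensity fun x ↦ ENNReal.ofReal (besselDensity α β x) := by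
  have hind : (fun x ↦ ENNReal.ofReal (indicator (Ioi 0) (besselDensity α β) x)) =
      indicator (Ioi 0) fun x ↦ ENNReal.ofReal (besselDensity α β x) :=
    (indicator_comp_of_zero ENNReal.ofReal_zero).symm
  rw [besselMeasure, Measure.restrict_add, Measure.restrict_smul, restrict_dirac,
    if_pos self_mem_Ici, restrict_withDensity measurableSet_Ici, hind,
    withDensity_indicator measurableSet_Ioi, Measure.restrict_restrict measurableSet_Ioi,
    inter_eq_left.mpr Ioi_subset_Ici_self]

theorem besselMeasure_charFun (α β : ℝ) (hα : 0 < α) (hβ : 0 < β)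
    (u : ℂ) (hu : u.re ≤ 0) :
    ∫ x in Set.Ici (0 : ℝ), Complex.exp (u * x) ∂(besselMeasure α β) =
      Complex.exp ((α : ℂ) * u / ((β : ℂ) - u)) := by
  have huβ : u.re < β := hu.trans_lt hβ
  have hβu : (β : ℂ) - u ≠ 0 := sub_ne_zero.mpr fun h ↦ by simp [← h] at huβ
  have hD := (measurable_besselDensity α β).aemeasurable (μ := volume.restrict (Ioi 0))
  have hD0 : 0 ≤ᵐ[volume.restrict (Ioi 0)] besselDensity α β :=
    ae_of_all _ (besselDensity_nonneg hβ.le)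
  have hatom : Integrable (fun x : ℝ ↦ Complex.exp (u * x))
      (ENNReal.ofReal (Real.exp (-α)) • Measure.dirac 0) :=
    (integrable_dirac (by simp)).smul_measure ENNReal.ofReal_ne_top
  have hcont : Integrable (fun x : ℝ ↦ Complex.exp (u * x))
      ((volume.restrict (Ioi 0)).withDensity fun x ↦ ENNReal.ofReal (besselDensity α β x)) := by
    rw [integrable_withDensity_ofReal_iff hD hD0]
    simp_rw [Complex.real_smul]
    exact integrableOn_besselDensity_mul_cexp hα.le hβ huβ
  rw [besselMeasure_restrict_Ici, integral_add_measure hatom hcont, integral_smul_measure,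
    integral_dirac, integral_withDensity_ofReal hD hD0]
  simp_rw [Complex.real_smul]
  rw [setIntegral_besselDensity_mul_cexp hα.le hβ huβ, ENNReal.toReal_ofReal (Real.exp_nonneg _),
    show (α : ℂ) * u / (β - u) = -α + α * β / (β - u) by field_simp; ring, Complex.exp_add,
    Complex.ofReal_exp]
  simp only [Complex.ofReal_neg, Complex.ofReal_zero, mul_zero, Complex.exp_zero, mul_one]
  ring
end

section
/- The function (α, β, γ, x) ↦ g_{α,β,γ}(x) is continuous on the domain D = (0,∞) × (0,∞) × (0,∞) × [0,∞). -/
open MeasureTheory Set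

/-! The series is a mixture of Gamma densities with negative binomial weights, so continuity
follows from the Weierstrass M-test on a neighbourhood of each point. The weights are bounded by
`max 1 γ ^ n`, because `Γ(n + γ) / (Γ(γ) n!) = ∏_{j < n} (γ + j) / (j + 1)`, and the `n`-th Gamma
density by `B ^ n X ^ (n - 1) / (n - 1)!` when `β ≤ B` and `x ≤ X`; the resulting majorant is an
exponential series. -/

/-- The negative binomial probability of `n` with shape `γ` and success probability
`α / (α + 1)`. -/
noncomputable def negBinomialWeight (α γ : ℝ) (n : ℕ) : ℝ :=
  α ^ n * Real.Gamma (n + γ) / ((α + 1) ^ ((n : ℝ) + γ) * Real.Gamma γ * Nat.factorial n)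

theorem gMix_eq_tsum (α β γ x : ℝ) :
    gMix α β γ x = ∑' k : ℕ, negBinomialWeight α γ (k + 1) * gammaDens (k + 1 : ℕ) β x :=
  rfl

theorem Real.continuousAt_Gamma_of_pos {s : ℝ} (hs : 0 < s) : ContinuousAt Real.Gamma s :=
  (Real.differentiableAt_Gamma fun m => by linarith [(m.cast_nonneg : (0 : ℝ) ≤ m)]).continuousAt

theorem Real.Gamma_nat_add_le {γ : ℝ} (hγ : 0 < γ) (n : ℕ) :
    Real.Gamma (n + γ) ≤ max 1 γ ^ n * Nat.factorial n * Real.Gamma γ := by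
  induction n with
  | zero => simp
  | succ n ih =>
    have hnγ : (n : ℝ) + γ ≤ (n + 1) * max 1 γ := by
      nlinarith [le_max_left 1 γ, le_max_right 1 γ, (n.cast_nonneg : (0 : ℝ) ≤ n)]
    rw [Nat.cast_succ, add_right_comm, Real.Gamma_add_one (by positivity), Nat.factorial_succ]
    push_cast
    calc ((n : ℝ) + γ) * Real.Gamma (n + γ)
        ≤ ((n + 1) * max 1 γ) * (max 1 γ ^ n * Nat.factorial n * Real.Gamma γ) :=
          mul_le_mul hnγ ih (Real.Gamma_pos_of_pos (by positivity)).le (by positivity)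
      _ = _ := by ring

theorem negBinomialWeight_nonneg {α γ : ℝ} (hα : 0 ≤ α) (hγ : 0 < γ) (n : ℕ) :
    0 ≤ negBinomialWeight α γ n := by
  have := Real.Gamma_pos_of_pos hγ
  have := Real.Gamma_pos_of_pos (show 0 < (n : ℝ) + γ by positivity)
  unfold negBinomialWeight
  positivity

theorem negBinomialWeight_le {α γ : ℝ} (hα : 0 ≤ α) (hγ : 0 < γ) (n : ℕ) :
    negBinomialWeight α γ n ≤ max 1 γ ^ n := by
  have hΓ := Real.Gamma_pos_of_pos hγ
  have hpow : α ^ n ≤ (α + 1) ^ ((n : ℝ) + γ) := calc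
    α ^ n ≤ (α + 1) ^ n := pow_le_pow_left₀ hα (by linarith) n
    _ = (α + 1) ^ (n : ℝ) := (Real.rpow_natCast _ _).symm
    _ ≤ (α + 1) ^ ((n : ℝ) + γ) := Real.rpow_le_rpow_of_exponent_le (by linarith) (by linarith)
  unfold negBinomialWeight
  rw [div_le_iff₀ (by positivity)]
  calc α ^ n * Real.Gamma (n + γ)
      ≤ (α + 1) ^ ((n : ℝ) + γ) * (max 1 γ ^ n * Nat.factorial n * Real.Gamma γ) :=
        mul_le_mul hpow (Real.Gamma_nat_add_le hγ n)
          (Real.Gamma_pos_of_pos (by positivity)).le (by positivity)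
    _ = _ := by ring

theorem continuousAt_negBinomialWeight {α γ : ℝ} (hα : -1 < α) (hγ : 0 < γ) (n : ℕ) :
    ContinuousAt (fun p : ℝ × ℝ => negBinomialWeight p.1 p.2 n) (α, γ) := by
  have hΓ : ContinuousAt (fun p : ℝ × ℝ => Real.Gamma p.2) (α, γ) :=
    ContinuousAt.comp (g := Real.Gamma) (f := Prod.snd) (Real.continuousAt_Gamma_of_pos hγ)
      continuousAt_snd
  have hΓn : ContinuousAt (fun p : ℝ × ℝ => Real.Gamma (n + p.2)) (α, γ) :=
    (Real.continuousAt_Gamma_of_pos (by positivity)).comp (f := fun p : ℝ × ℝ => n + p.2)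
      (by fun_prop)
  have hrpow : ContinuousAt (fun p : ℝ × ℝ => (p.1 + 1) ^ ((n : ℝ) + p.2)) (α, γ) :=
    ContinuousAt.rpow (by fun_prop) (by fun_prop) (Or.inl (by simp; linarith))
  refine ((continuousAt_fst.pow n).mul hΓn).div ((hrpow.mul hΓ).mul continuousAt_const) ?_
  have := Real.Gamma_pos_of_pos hγ
  have : (0 : ℝ) < α + 1 := by linarith
  positivity

theorem gammaDens_nat_succ (n : ℕ) (r x : ℝ) :
    gammaDens (n + 1 : ℕ) r x = r ^ (n + 1) * x ^ n * Real.exp (-r * x) / Nat.factorial n := by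
  rw [gammaDens, Nat.cast_succ, add_sub_cancel_right, Real.Gamma_nat_eq_factorial,
    ← Nat.cast_succ, Real.rpow_natCast, Real.rpow_natCast]

theorem continuous_gammaDens_nat_succ (n : ℕ) :
    Continuous fun p : ℝ × ℝ => gammaDens (n + 1 : ℕ) p.1 p.2 := by
  simp_rw [gammaDens_nat_succ]
  fun_prop

theorem gammaDens_nat_succ_nonneg (n : ℕ) {r x : ℝ} (hr : 0 ≤ r) (hx : 0 ≤ x) :
    0 ≤ gammaDens (n + 1 : ℕ) r x := by
  rw [gammaDens_nat_succ]
  positivity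

theorem gammaDens_nat_succ_le (n : ℕ) {r R x X : ℝ} (hr : 0 ≤ r) (hrR : r ≤ R) (hx : 0 ≤ x)
    (hxX : x ≤ X) : gammaDens (n + 1 : ℕ) r x ≤ R ^ (n + 1) * X ^ n / Nat.factorial n := by
  have hR : 0 ≤ R := hr.trans hrR
  rw [gammaDens_nat_succ]
  gcongr ?_ / _
  calc r ^ (n + 1) * x ^ n * Real.exp (-r * x) ≤ r ^ (n + 1) * x ^ n * 1 := by
        gcongr
        exact Real.exp_le_one_iff.mpr (by nlinarith)
    _ ≤ R ^ (n + 1) * X ^ n := by rw [mul_one]; gcongr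

theorem continuousOn_gMix_of_lt (B c X : ℝ) :
    ContinuousOn (fun p : ℝ × ℝ × ℝ × ℝ => gMix p.1 p.2.1 p.2.2.1 p.2.2.2)
      ((Ioi 0 ×ˢ Ioi 0 ×ˢ Ioi 0 ×ˢ Ici 0) ∩ (univ ×ˢ Iio B ×ˢ Iio c ×ˢ Iio X)) := by
  simp only [gMix_eq_tsum]
  set m := max 1 c
  refine continuousOn_tsum (u := fun k => m * B * ((m * B * X) ^ k / Nat.factorial k)) ?_
    ((Real.summable_pow_div_factorial _).mul_left _) ?_
  · rintro k p ⟨⟨hα, -, hγ, -⟩, -⟩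
    have hweight := (continuousAt_negBinomialWeight (by linarith [mem_Ioi.1 hα]) hγ (k + 1)).comp
      (f := fun p : ℝ × ℝ × ℝ × ℝ => (p.1, p.2.2.1)) (by fun_prop)
    have hdens := (continuous_gammaDens_nat_succ k).continuousAt.comp (x := p)
      (f := fun p : ℝ × ℝ × ℝ × ℝ => (p.2.1, p.2.2.2)) (by fun_prop)
    exact (hweight.mul hdens).continuousWithinAt
  · rintro k p ⟨⟨hα, hβ, hγ, hx⟩, -, hβB, hγc, hxX⟩
    have hB : 0 < B := (mem_Ioi.1 hβ).trans hβB
    have hX : 0 ≤ X := (mem_Ici.1 hx).trans (mem_Iio.1 hxX).le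
    have hweight : negBinomialWeight p.1 p.2.2.1 (k + 1) ≤ m ^ (k + 1) :=
      (negBinomialWeight_le (mem_Ioi.1 hα).le hγ _).trans
        (pow_le_pow_left₀ (by positivity) (max_le_max le_rfl (mem_Iio.1 hγc).le) _)
    rw [Real.norm_of_nonneg (mul_nonneg (negBinomialWeight_nonneg (mem_Ioi.1 hα).le hγ _)
      (gammaDens_nat_succ_nonneg _ (mem_Ioi.1 hβ).le hx))]
    calc _ ≤ m ^ (k + 1) * (B ^ (k + 1) * X ^ k / Nat.factorial k) :=
          mul_le_mul hweight (gammaDens_nat_succ_le k (mem_Ioi.1 hβ).le (mem_Iio.1 hβB).le hx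
            (mem_Iio.1 hxX).le) (gammaDens_nat_succ_nonneg _ (mem_Ioi.1 hβ).le hx) (by positivity)
      _ = _ := by ring

theorem gMix_continuousOn :
    ContinuousOn (fun p : ℝ × ℝ × ℝ × ℝ => gMix p.1 p.2.1 p.2.2.1 p.2.2.2)
      (Set.Ioi 0 ×ˢ Set.Ioi 0 ×ˢ Set.Ioi 0 ×ˢ Set.Ici 0) :=
  continuousOn_of_locally_continuousOn fun p _ =>
    ⟨univ ×ˢ Iio (p.2.1 + 1) ×ˢ Iio (p.2.2.1 + 1) ×ˢ Iio (p.2.2.2 + 1),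
      isOpen_univ.prod (isOpen_Iio.prod (isOpen_Iio.prod isOpen_Iio)), by simp,
      continuousOn_gMix_of_lt _ _ _⟩
end

section
/- Fix constants a, θ, σ, c, d > 0 and set Δ = a − σ²d/2. Define ψ(t,u) = u e^{−at}/(1 − (σ²/(2a)) u (1−e^{−at})) and, if Δ ≠ 0, φ(t,u) = −(2aθ/σ²) log(1 − (σ²/(2a)) u (1−e^{−at})) + (c/Δ) log( (d − σ²du/(2a) + (σ²d/(2a) − 1) u e^{−at})/(d − u) ), while if Δ = 0, φ(t,u) = −(2aθ/σ²) log(1 − (σ²/(2a)) u (1−e^{−at})) + c u (1−e^{−at})/(a(d−u)). Then for every u ∈ ℂ with Re u ≤ 0 and every t ≥ 0: ψ(0,u) = u, φ(0,u) = 0, ∂_t ψ(t,u) = (σ²/2) ψ(t,u)² − a ψ(t,u), and ∂_t φ(t,u) = aθ ψ(t,u) + c ψ(t,u)/(d − ψ(t,u)); that is, ψ and φ solve the generalized Riccati equations ∂_t ψ = R(ψ), ψ(0,u) = u and ∂_t φ = F(ψ(t,u)), φ(0,u) = 0 with R(u) = σ²u²/2 − au and F(u) = aθu + cu/(d−u).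 -/
open MeasureTheory Set

/-- The function `ψ(t,u)` solving the second generalized Riccati equation. -/
noncomputable def riccatiPsi (a σ : ℝ) (t : ℝ) (u : ℂ) : ℂ :=
  u * Complex.exp (-(a : ℂ) * t) /
    (1 - ((σ ^ 2 / (2 * a) : ℝ) : ℂ) * u * (1 - Complex.exp (-(a : ℂ) * t)))

/-- The function `φ(t,u)` solving the first generalized Riccati equation. -/
noncomputable def riccatiPhi (a θ σ c d : ℝ) (t : ℝ) (u : ℂ) : ℂ :=
  if a - σ ^ 2 * d / 2 ≠ 0 then
    -((2 * a * θ / σ ^ 2 : ℝ) : ℂ) *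
        Complex.log (1 - ((σ ^ 2 / (2 * a) : ℝ) : ℂ) * u * (1 - Complex.exp (-(a : ℂ) * t))) +
      ((c / (a - σ ^ 2 * d / 2) : ℝ) : ℂ) *
        Complex.log (((d : ℂ) - ((σ ^ 2 * d / (2 * a) : ℝ) : ℂ) * u +
            (((σ ^ 2 * d / (2 * a) : ℝ) : ℂ) - 1) * u * Complex.exp (-(a : ℂ) * t)) /
          ((d : ℂ) - u))
  else
    -((2 * a * θ / σ ^ 2 : ℝ) : ℂ) *
        Complex.log (1 - ((σ ^ 2 / (2 * a) : ℝ) : ℂ) * u * (1 - Complex.exp (-(a : ℂ) * t))) +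
      (c : ℂ) * u * (1 - Complex.exp (-(a : ℂ) * t)) / ((a : ℂ) * ((d : ℂ) - u))

/-!
With `E = e^{-at}`, `ψ = u E / D` for `D = 1 - (σ²/(2a)) u (1 - E)`, and `d - ψ = N / D` where
`N = d - (σ²d/(2a)) u + (σ²d/(2a) - 1) u E` is the argument of the second logarithm of `φ` up to
the constant factor `d - u`. Since `E' = -aE`, we get `D' = -(σ²/2) u E` and `N' = Δ u E`, so both
Riccati equations become rational identities in `u` and `E`. For `Re u ≤ 0` and `t ≥ 0` the
numbers `D`, `N` and `d - u` have positive real part, so `D` and `N / (d - u)` lie in the slit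
plane, where the principal logarithm is differentiable.
-/

open Complex

noncomputable def riccatiDen (a σ t : ℝ) (u : ℂ) : ℂ :=
  1 - ((σ ^ 2 / (2 * a) : ℝ) : ℂ) * u * (1 - Complex.exp (-(a : ℂ) * t))

noncomputable def riccatiNum (a σ d t : ℝ) (u : ℂ) : ℂ :=
  (d : ℂ) - ((σ ^ 2 * d / (2 * a) : ℝ) : ℂ) * u +
    (((σ ^ 2 * d / (2 * a) : ℝ) : ℂ) - 1) * u * Complex.exp (-(a : ℂ) * t)

lemma cexp_neg_ofReal_mul (a t : ℝ) :
    Complex.exp (-(a : ℂ) * t) = (Real.exp (-a * t) : ℂ) := by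
  push_cast; rfl

lemma hasDerivAt_cexp_neg_ofReal_mul (a t : ℝ) :
    HasDerivAt (fun s : ℝ => Complex.exp (-(a : ℂ) * s))
      (-(a : ℂ) * Complex.exp (-(a : ℂ) * t)) t := by
  simpa [mul_comm] using (((hasDerivAt_id (t : ℂ)).const_mul (-(a : ℂ))).cexp).comp_ofReal

lemma re_ofReal_sub_ofReal_mul_pos {x r : ℝ} {u : ℂ} (hx : 0 < x) (hr : 0 ≤ r)
    (hu : u.re ≤ 0) : 0 < ((x : ℂ) - r * u).re := by
  simp only [sub_re, ofReal_re, re_ofReal_mul]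
  nlinarith

lemma div_mem_slitPlane_of_re_pos {z w : ℂ} (hz : 0 < z.re) (hw : 0 < w.re) :
    z / w ∈ slitPlane := by
  rw [mem_slitPlane_iff, or_iff_not_imp_right, not_not]
  intro him
  have hw0 : w ≠ 0 := fun h => by simp [h] at hw
  have hre : z.re = (z / w).re * w.re := by
    conv_lhs => rw [← div_mul_cancel₀ z hw0]
    simp [mul_re, him]
  by_contra! hle
  nlinarith

section

variable {a σ d t : ℝ} {u : ℂ}

lemma riccatiPsi_eq_div :
    riccatiPsi a σ t u = u * Complex.exp (-(a : ℂ) * t) / riccatiDen a σ t u := rfl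

lemma riccatiPsi_zero : riccatiPsi a σ 0 u = u := by
  simp [riccatiPsi]

lemma riccatiPhi_zero (θ c : ℝ) (hdu : (d : ℂ) - u ≠ 0) :
    riccatiPhi a θ σ c d 0 u = 0 := by
  have hnum : (d : ℂ) - ((σ ^ 2 * d / (2 * a) : ℝ) : ℂ) * u +
      (((σ ^ 2 * d / (2 * a) : ℝ) : ℂ) - 1) * u = (d : ℂ) - u := by ring
  simp only [riccatiPhi, ofReal_zero, mul_zero, Complex.exp_zero, sub_self, mul_one, hnum,
    div_self hdu, log_one]
  simp

lemma riccatiDen_re_pos (ha : 0 < a) (ht : 0 ≤ t) (hu : u.re ≤ 0) :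
    0 < (riccatiDen a σ t u).re := by
  have he : Real.exp (-a * t) ≤ 1 := Real.exp_le_one_iff.2 (by nlinarith)
  have key := re_ofReal_sub_ofReal_mul_pos (x := 1)
    (r := σ ^ 2 / (2 * a) * (1 - Real.exp (-a * t))) one_pos (by have := sub_nonneg.2 he; positivity) hu
  convert key using 2
  rw [riccatiDen, cexp_neg_ofReal_mul]
  push_cast; ring

lemma riccatiNum_re_pos (ha : 0 < a) (hd : 0 < d) (ht : 0 ≤ t) (hu : u.re ≤ 0) :
    0 < (riccatiNum a σ d t u).re := by
  have he : Real.exp (-a * t) ≤ 1 := Real.exp_le_one_iff.2 (by nlinarith)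
  have key := re_ofReal_sub_ofReal_mul_pos (x := d)
    (r := σ ^ 2 * d / (2 * a) * (1 - Real.exp (-a * t)) + Real.exp (-a * t))
    hd (by have := sub_nonneg.2 he; positivity) hu
  convert key using 2
  rw [riccatiNum, cexp_neg_ofReal_mul]
  push_cast; ring

lemma sub_riccatiPsi (hD : riccatiDen a σ t u ≠ 0) :
    (d : ℂ) - riccatiPsi a σ t u = riccatiNum a σ d t u / riccatiDen a σ t u := by
  rw [riccatiPsi_eq_div, eq_div_iff hD, sub_mul, div_mul_cancel₀ _ hD, riccatiDen, riccatiNum]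
  push_cast; ring

lemma riccatiPsi_div_sub_riccatiPsi (hD : riccatiDen a σ t u ≠ 0) :
    riccatiPsi a σ t u / ((d : ℂ) - riccatiPsi a σ t u) =
      u * Complex.exp (-(a : ℂ) * t) / riccatiNum a σ d t u := by
  rw [sub_riccatiPsi hD, riccatiPsi_eq_div, div_div_div_cancel_right₀ hD]

lemma hasDerivAt_riccatiDen (ha : a ≠ 0) :
    HasDerivAt (fun s => riccatiDen a σ s u)
      (-((σ : ℂ) ^ 2 / 2) * u * Complex.exp (-(a : ℂ) * t)) t := by
  refine ((((hasDerivAt_cexp_neg_ofReal_mul a t).const_sub 1).const_mul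
    (((σ ^ 2 / (2 * a) : ℝ) : ℂ) * u)).const_sub 1).congr_deriv ?_
  have ha' : (a : ℂ) ≠ 0 := ofReal_ne_zero.2 ha
  push_cast
  field_simp

lemma hasDerivAt_riccatiNum (ha : a ≠ 0) :
    HasDerivAt (fun s => riccatiNum a σ d s u)
      (((a - σ ^ 2 * d / 2 : ℝ) : ℂ) * u * Complex.exp (-(a : ℂ) * t)) t := by
  refine (((hasDerivAt_cexp_neg_ofReal_mul a t).const_mul
    ((((σ ^ 2 * d / (2 * a) : ℝ) : ℂ) - 1) * u)).const_add
    ((d : ℂ) - ((σ ^ 2 * d / (2 * a) : ℝ) : ℂ) * u)).congr_deriv ?_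
  have ha' : (a : ℂ) ≠ 0 := ofReal_ne_zero.2 ha
  push_cast
  field_simp
  ring

theorem hasDerivAt_riccatiPsi (ha : a ≠ 0) (hD : riccatiDen a σ t u ≠ 0) :
    HasDerivAt (fun s => riccatiPsi a σ s u)
      ((σ : ℂ) ^ 2 / 2 * riccatiPsi a σ t u ^ 2 - (a : ℂ) * riccatiPsi a σ t u) t := by
  refine (((hasDerivAt_cexp_neg_ofReal_mul a t).const_mul u).div
    (hasDerivAt_riccatiDen ha) hD).congr_deriv ?_
  rw [riccatiPsi_eq_div]
  field_simp
  ring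

lemma hasDerivAt_neg_mul_log_riccatiDen (θ : ℝ) (ha : a ≠ 0) (hσ : σ ≠ 0)
    (hD : riccatiDen a σ t u ∈ slitPlane) :
    HasDerivAt (fun s => -((2 * a * θ / σ ^ 2 : ℝ) : ℂ) * Complex.log (riccatiDen a σ s u))
      ((a : ℂ) * θ * riccatiPsi a σ t u) t := by
  refine (((hasDerivAt_riccatiDen ha).clog_real hD).const_mul _).congr_deriv ?_
  have hD0 := slitPlane_ne_zero hD
  have hσ' : (σ : ℂ) ≠ 0 := ofReal_ne_zero.2 hσ
  rw [riccatiPsi_eq_div]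
  push_cast
  field_simp

lemma hasDerivAt_mul_log_riccatiNum_div (c : ℝ) (ha : a ≠ 0) (hΔ : a - σ ^ 2 * d / 2 ≠ 0)
    (hN : riccatiNum a σ d t u / ((d : ℂ) - u) ∈ slitPlane) :
    HasDerivAt (fun s => ((c / (a - σ ^ 2 * d / 2) : ℝ) : ℂ) *
        Complex.log (riccatiNum a σ d s u / ((d : ℂ) - u)))
      ((c : ℂ) * (u * Complex.exp (-(a : ℂ) * t) / riccatiNum a σ d t u)) t := by
  refine ((((hasDerivAt_riccatiNum ha).div_const _).clog_real hN).const_mul _).congr_deriv ?_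
  obtain ⟨hN0, hdu⟩ := div_ne_zero_iff.1 (slitPlane_ne_zero hN)
  have hΔ' : ((a - σ ^ 2 * d / 2 : ℝ) : ℂ) ≠ 0 := ofReal_ne_zero.2 hΔ
  rw [ofReal_div]
  generalize ((a - σ ^ 2 * d / 2 : ℝ) : ℂ) = Δ at hΔ' ⊢
  field_simp

lemma riccatiNum_of_eq_zero (ha : a ≠ 0) (hΔ : a - σ ^ 2 * d / 2 = 0) :
    riccatiNum a σ d t u = d - u := by
  have hm : σ ^ 2 * d / (2 * a) = 1 := by field_simp; linarith
  rw [riccatiNum, hm]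
  push_cast
  ring

lemma hasDerivAt_mul_one_sub_cexp_div (c : ℝ) (ha : a ≠ 0) :
    HasDerivAt (fun s : ℝ => (c : ℂ) * u * (1 - Complex.exp (-(a : ℂ) * s)) /
        ((a : ℂ) * ((d : ℂ) - u)))
      ((c : ℂ) * (u * Complex.exp (-(a : ℂ) * t) / ((d : ℂ) - u))) t := by
  have ha' : (a : ℂ) ≠ 0 := ofReal_ne_zero.2 ha
  refine ((((hasDerivAt_cexp_neg_ofReal_mul a t).const_sub 1).const_mul ((c : ℂ) * u)).div_const
    _).congr_deriv ?_
  field_simp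

theorem hasDerivAt_riccatiPhi (θ c : ℝ) (ha : a ≠ 0) (hσ : σ ≠ 0)
    (hD : riccatiDen a σ t u ∈ slitPlane)
    (hN : riccatiNum a σ d t u / ((d : ℂ) - u) ∈ slitPlane) :
    HasDerivAt (fun s => riccatiPhi a θ σ c d s u)
      ((a : ℂ) * (θ : ℂ) * riccatiPsi a σ t u +
        (c : ℂ) * riccatiPsi a σ t u / ((d : ℂ) - riccatiPsi a σ t u)) t := by
  rw [mul_div_assoc, riccatiPsi_div_sub_riccatiPsi (slitPlane_ne_zero hD)]
  have hlog := hasDerivAt_neg_mul_log_riccatiDen θ ha hσ hD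
  by_cases hΔ : a - σ ^ 2 * d / 2 = 0
  · rw [riccatiNum_of_eq_zero ha hΔ]
    exact (hlog.add (hasDerivAt_mul_one_sub_cexp_div c ha)).congr_of_eventuallyEq
      (.of_forall fun _ => if_neg (not_not.2 hΔ))
  · exact (hlog.add (hasDerivAt_mul_log_riccatiNum_div c ha hΔ hN)).congr_of_eventuallyEq
      (.of_forall fun _ => if_pos hΔ)

end

theorem riccati_solution_general (a θ σ c d : ℝ) (ha : 0 < a) (hσ : 0 < σ)
    (hd : 0 < d) (u : ℂ) (hu : u.re ≤ 0) (t : ℝ) (ht : 0 ≤ t) :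
    riccatiPsi a σ 0 u = u ∧ riccatiPhi a θ σ c d 0 u = 0 ∧
      HasDerivAt (fun s => riccatiPsi a σ s u)
        ((σ : ℂ) ^ 2 / 2 * riccatiPsi a σ t u ^ 2 - (a : ℂ) * riccatiPsi a σ t u) t ∧
      HasDerivAt (fun s => riccatiPhi a θ σ c d s u)
        ((a : ℂ) * (θ : ℂ) * riccatiPsi a σ t u +
          (c : ℂ) * riccatiPsi a σ t u / ((d : ℂ) - riccatiPsi a σ t u)) t := by
  have hdu : 0 < ((d : ℂ) - u).re := by
    simpa using re_ofReal_sub_ofReal_mul_pos hd zero_le_one hu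
  have hD := riccatiDen_re_pos (σ := σ) ha ht hu
  have hN := riccatiNum_re_pos (σ := σ) ha hd ht hu
  exact ⟨riccatiPsi_zero, riccatiPhi_zero θ c (ne_zero_of_re_pos hdu),
    hasDerivAt_riccatiPsi ha.ne' (ne_zero_of_re_pos hD),
    hasDerivAt_riccatiPhi θ c ha.ne' hσ.ne' (mem_slitPlane_iff.2 (Or.inl hD))
      (div_mem_slitPlane_of_re_pos hN hdu)⟩

theorem riccati_solution (a θ σ c d : ℝ) (ha : 0 < a) (hθ : 0 < θ) (hσ : 0 < σ)
    (hc : 0 < c) (hd : 0 < d) (u : ℂ) (hu : u.re ≤ 0) (t : ℝ) (ht : 0 ≤ t) :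
    riccatiPsi a σ 0 u = u ∧ riccatiPhi a θ σ c d 0 u = 0 ∧
      HasDerivAt (fun s => riccatiPsi a σ s u)
        ((σ : ℂ) ^ 2 / 2 * riccatiPsi a σ t u ^ 2 - (a : ℂ) * riccatiPsi a σ t u) t ∧
      HasDerivAt (fun s => riccatiPhi a θ σ c d s u)
        ((a : ℂ) * (θ : ℂ) * riccatiPsi a σ t u +
          (c : ℂ) * riccatiPsi a σ t u / ((d : ℂ) - riccatiPsi a σ t u)) t :=
  riccati_solution_general a θ σ c d ha hσ hd u hu t ht
end

section
/- Fix a, θ, σ, c, d > 0. There exists γ ∈ (0, d) such that the function V(x) = e^{γx} is a Foster–Lyapunov function for the BAJD generator: there exist constants k, M ∈ (0,∞) such that for all x ≥ 0, 𝒜V(x) := (1/2)σ²γ²x e^{γx} + (aθ − ax)γ e^{γx} + cd ∫_0^∞ (e^{γ(x+y)} − e^{γx}) e^{−dy} dy ≤ −k V(x) + M. -/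
open MeasureTheory Set

/-!
With `V(x) = e^{γx}` the jump term is explicit, `c d ∫₀^∞ (e^{γ(x+y)} - e^{γx}) e^{-dy} dy =
(cγ/(d-γ)) e^{γx}`, so `𝒜V(x) = e^{γx} (C - b x)` with `C = aθγ + cγ/(d-γ)` and
`b = γ (a - σ²γ/2)`. Taking `γ ≤ a/σ²` makes `b > 0`, and then `e^{γx}(C + 1 - b x)` is bounded
above on `[0, ∞)`, being nonpositive as soon as `x ≥ (C + 1)/b`; this gives `k = 1`.
-/

open Real

lemma integral_Ioi_exp_add_sub_exp_mul_exp_neg {γ d : ℝ} (hd : 0 < d) (hγd : γ < d) (x : ℝ) :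
    ∫ y in Ioi (0 : ℝ), (exp (γ * (x + y)) - exp (γ * x)) * exp (-d * y) =
      γ / (d * (d - γ)) * exp (γ * x) := by
  have hsplit : ∀ y, (exp (γ * (x + y)) - exp (γ * x)) * exp (-d * y) =
      exp (γ * x) * (exp ((γ - d) * y) - exp (-d * y)) := fun y => by
    rw [sub_mul, mul_sub, ← exp_add, ← exp_add, ← exp_add]
    congr 2; ring
  have hγd' : γ - d < 0 := by linarith
  have hd' : -d < 0 := neg_lt_zero.mpr hd
  simp_rw [hsplit]
  rw [integral_const_mul, integral_sub (integrableOn_exp_mul_Ioi hγd' 0)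
    (integrableOn_exp_mul_Ioi hd' 0), integral_exp_mul_Ioi hγd', integral_exp_mul_Ioi hd']
  simp only [mul_zero, exp_zero]
  have hdγ : d - γ ≠ 0 := by linarith
  field_simp [hγd'.ne]
  ring

lemma exp_mul_mul_sub_mul_le {γ A b x : ℝ} (hγ : 0 ≤ γ) (hA : 0 ≤ A) (hb : 0 < b)
    (hx : 0 ≤ x) : exp (γ * x) * (A - b * x) ≤ exp (γ * (A / b)) * A := by
  rcases le_or_gt (A - b * x) 0 with hneg | hpos
  · exact (mul_nonpos_of_nonneg_of_nonpos (exp_pos _).le hneg).trans (by positivity)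
  · have hxA : x ≤ A / b := by rw [le_div_iff₀ hb]; linarith
    gcongr
    nlinarith

theorem bajd_foster_lyapunov (a θ σ c d : ℝ) (ha : 0 < a) (hθ : 0 < θ) (hσ : 0 < σ)
    (hc : 0 < c) (hd : 0 < d) :
    ∃ γ ∈ Set.Ioo (0 : ℝ) d, ∃ k M : ℝ, 0 < k ∧ 0 < M ∧
      ∀ x : ℝ, 0 ≤ x →
        1 / 2 * σ ^ 2 * γ ^ 2 * x * Real.exp (γ * x) +
            (a * θ - a * x) * γ * Real.exp (γ * x) +
            c * d * ∫ y in Set.Ioi (0 : ℝ),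
              (Real.exp (γ * (x + y)) - Real.exp (γ * x)) * Real.exp (-d * y) ≤
          -k * Real.exp (γ * x) + M := by
  set γ := min (a / σ ^ 2) (d / 2)
  have hγ : 0 < γ := lt_min (by positivity) (by positivity)
  have hγd : γ < d := (min_le_right _ _).trans_lt (by linarith)
  have hσγ : σ ^ 2 * γ ≤ a := by
    rw [← le_div_iff₀' (by positivity)]
    exact min_le_left _ _
  set C := a * θ * γ + c * γ / (d - γ)
  set b := γ * (a - σ ^ 2 * γ / 2)
  have hdγ : 0 < d - γ := by linarith
  have hC : 0 ≤ C := by positivity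
  have hb : 0 < b := mul_pos hγ (by linarith)
  refine ⟨γ, ⟨hγ, hγd⟩, 1, exp (γ * ((C + 1) / b)) * (C + 1), one_pos, by positivity,
    fun x hx => ?_⟩
  have hgenerator : 1 / 2 * σ ^ 2 * γ ^ 2 * x * exp (γ * x) + (a * θ - a * x) * γ * exp (γ * x) +
      c * d * (γ / (d * (d - γ)) * exp (γ * x)) = -1 * exp (γ * x) +
        exp (γ * x) * (C + 1 - b * x) := by
    simp only [C, b]
    field_simp [hdγ.ne']
    ring
  rw [integral_Ioi_exp_add_sub_exp_mul_exp_neg hd hγd, hgenerator]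
  linarith [exp_mul_mul_sub_mul_le hγ.le (by linarith : 0 ≤ C + 1) hb hx]
end
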